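/- arXiv:1308.5343 — 2 statements merged into one kernel-verified Lean document; each statement's English description precedes it below -/
import Mathlib

section
/- Let $\{X_k\}$ be a sequence of i.i.d. random variables with $E|X_k| < \infty$ and $E[X_k] = \mu$. Let $(a_{nk})$ be a triangular array of real weights satisfying: (i) $\lim_{n\to\infty} a_{nk} = 0$ for every fixed $k$; (ii) $\lim_{n\to\infty} \sum_{k} a_{nk} = 1$; (iii) $\sum_k |a_{nk}| \le M$ for all $n$. If additionally $\max_k |a_{nk}| \to 0$ as $n \to \infty$, then $\sum_k a_{nk} X_k \to \mu$ in probability. -/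
open MeasureTheory ProbabilityTheory Filter
open Topology
open scoped ENNReal NNReal

private lemma clamp_eq_of_abs_le {c x : ℝ} (h : |x| ≤ c) : max (-c) (min c x) = x := by
  rw [min_eq_right (abs_le.1 h).2, max_eq_right (abs_le.1 h).1]

private lemma abs_clamp_le {c x : ℝ} (hc : 0 ≤ c) : |max (-c) (min c x)| ≤ c :=
  abs_le.2 ⟨le_max_left _ _, max_le (by linarith) (min_le_left _ _)⟩

private lemma abs_sub_clamp_le {c x : ℝ} (hc : 0 ≤ c) : |x - max (-c) (min c x)| ≤ |x| := by
  rcases le_or_gt (|x|) c with h | h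
  · rw [clamp_eq_of_abs_le h, sub_self, abs_zero]; exact abs_nonneg x
  · rcases le_or_gt 0 x with hx | hx
    · have hcx : c ≤ x := by rw [abs_of_nonneg hx] at h; linarith
      rw [min_eq_left hcx, max_eq_right (by linarith), abs_of_nonneg (by linarith),
        abs_of_nonneg hx]
      linarith
    · have hcx : x ≤ -c := by rw [abs_of_neg hx] at h; linarith
      rw [min_eq_right (by linarith), max_eq_left hcx, abs_of_nonpos (by linarith),
        abs_of_neg hx]
      linarith

private lemma continuous_clamp (c : ℝ) : Continuous fun x : ℝ => max (-c) (min c x) :=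
  continuous_const.max (continuous_const.min continuous_id)

private lemma tendsto_abs_sub_clamp (x : ℝ) :
    Tendsto (fun j : ℕ => |x - max (-(j:ℝ)) (min (j:ℝ) x)|) atTop (𝓝 0) := by
  refine tendsto_const_nhds.congr' ?_
  filter_upwards [eventually_ge_atTop ⌈|x|⌉₊] with j hj
  have : |x| ≤ (j : ℝ) := le_trans (Nat.le_ceil _) (by exact_mod_cast hj)
  rw [clamp_eq_of_abs_le this, sub_self, abs_zero]

set_option maxHeartbeats 1000000 in
/-- Pruitt's weighted weak law of large numbers: if `X` is an i.i.d. sequence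
with finite mean `μ`, and `a` is a triangular array of weights with
`a n k → 0` for each fixed `k`, row sums tending to `1`, absolute row sums
bounded by `M`, and maximal entry tending to `0`, then `∑ k, a n k * X k`
tends to `μ` in probability. -/
theorem stmt2 {Ω : Type*} [MeasurableSpace Ω] (P : Measure Ω) [IsProbabilityMeasure P]
    (X : ℕ → Ω → ℝ) (μ : ℝ)
    (hmeas : ∀ k, Measurable (X k))
    (hindep : iIndepFun X P)
    (hident : ∀ k, Measure.map (X k) P = Measure.map (X 0) P)
    (hint : Integrable (X 0) P)
    (hmean : ∫ ω, X 0 ω ∂P = μ)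
    (a : ℕ → ℕ → ℝ) (M : ℝ)
    (hsummable : ∀ n, Summable (fun k => |a n k|))
    (h1 : ∀ k, Tendsto (fun n => a n k) atTop (nhds 0))
    (h2 : Tendsto (fun n => ∑' k, a n k) atTop (nhds 1))
    (h3 : ∀ n, ∑' k, |a n k| ≤ M)
    (hmax : Tendsto (fun n => ⨆ k, |a n k|) atTop (nhds 0)) :
    TendstoInMeasure P (fun n ω => ∑' k, a n k * X k ω) atTop (fun _ => μ) := by
  classical
  have hM0 : 0 ≤ M := le_trans (tsum_nonneg fun k => abs_nonneg _) (h3 0)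
  have idk : ∀ k, IdentDistrib (X k) (X 0) P P :=
    fun k => ⟨(hmeas k).aemeasurable, (hmeas 0).aemeasurable, hident k⟩
  have hintX : ∀ k, Integrable (X k) P := fun k => (idk k).integrable_iff.2 hint
  -- lintegral of |X k| coincides with that of |X 0|
  have hlX : ∀ k, ∫⁻ ω, ENNReal.ofReal |X k ω| ∂P = ∫⁻ ω, ENNReal.ofReal |X 0 ω| ∂P := by
    intro k
    have hm : Measurable fun x : ℝ => ENNReal.ofReal |x| := measurable_abs.ennreal_ofReal
    calc ∫⁻ ω, ENNReal.ofReal |X k ω| ∂P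
        = ∫⁻ x, ENNReal.ofReal |x| ∂(P.map (X k)) := (lintegral_map hm (hmeas k)).symm
      _ = ∫⁻ x, ENNReal.ofReal |x| ∂(P.map (X 0)) := by rw [hident k]
      _ = _ := lintegral_map hm (hmeas 0)
  have hK : ∫⁻ ω, ENNReal.ofReal |X 0 ω| ∂P < ⊤ := by
    have := hint.2
    rw [hasFiniteIntegral_iff_norm] at this
    simpa [Real.norm_eq_abs] using this
  -- a.e. absolute summability of the weighted series
  have hsumae : ∀ n, ∀ᵐ ω ∂P, Summable fun k => |a n k * X k ω| := by
    intro n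
    have hmeas' : ∀ k : ℕ, Measurable fun ω => ENNReal.ofReal |a n k * X k ω| := fun k =>
      (((hmeas k).const_mul _).abs).ennreal_ofReal
    have hlt : ∫⁻ ω, ∑' k, ENNReal.ofReal |a n k * X k ω| ∂P < ⊤ := by
      rw [lintegral_tsum fun k => (hmeas' k).aemeasurable]
      have heach : ∀ k, ∫⁻ ω, ENNReal.ofReal |a n k * X k ω| ∂P
          = ENNReal.ofReal |a n k| * ∫⁻ ω, ENNReal.ofReal |X 0 ω| ∂P := by
        intro k
        rw [← hlX k, ← lintegral_const_mul _ ((hmeas k).abs.ennreal_ofReal)]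
        congr 1; funext ω
        rw [abs_mul, ENNReal.ofReal_mul (abs_nonneg _)]
      simp_rw [heach]
      rw [ENNReal.tsum_mul_right]
      refine ENNReal.mul_lt_top ?_ hK
      calc ∑' k, ENNReal.ofReal |a n k| = ENNReal.ofReal (∑' k, |a n k|) :=
            (ENNReal.ofReal_tsum_of_nonneg (fun k => abs_nonneg _) (hsummable n)).symm
        _ < ⊤ := ENNReal.ofReal_lt_top
    have hae := ae_lt_top (Measurable.ennreal_tsum hmeas') hlt.ne
    filter_upwards [hae] with ω hω
    have hs : Summable fun k => (Real.toNNReal |a n k * X k ω|) := by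
      rw [← ENNReal.tsum_coe_ne_top_iff_summable]
      simpa [ENNReal.ofReal] using hω.ne
    have h2' := (NNReal.summable_coe).2 hs
    refine h2'.congr fun k => ?_
    rw [Real.coe_toNNReal _ (abs_nonneg _)]
  -- truncation with small L¹ error
  have htrunc : ∀ δ : ℝ, 0 < δ →
      ∃ c : ℕ, ∫ ω, |X 0 ω - max (-(c:ℝ)) (min (c:ℝ) (X 0 ω))| ∂P ≤ δ := by
    intro δ hδ
    have hmeasj : ∀ j : ℕ, AEStronglyMeasurable
        (fun ω => |X 0 ω - max (-(j:ℝ)) (min (j:ℝ) (X 0 ω))|) P := fun j =>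
      (((hmeas 0).sub ((continuous_clamp (j:ℝ)).measurable.comp (hmeas 0))).abs).aestronglyMeasurable
    have hlim : Tendsto (fun j : ℕ => ∫ ω, |X 0 ω - max (-(j:ℝ)) (min (j:ℝ) (X 0 ω))| ∂P)
        atTop (𝓝 (∫ ω, (0:ℝ) ∂P)) := by
      refine tendsto_integral_of_dominated_convergence (fun ω => |X 0 ω|) hmeasj hint.abs ?_ ?_
      · intro j
        filter_upwards with ω
        rw [Real.norm_eq_abs, abs_abs]
        exact abs_sub_clamp_le (Nat.cast_nonneg j)
      · filter_upwards with ω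
        exact tendsto_abs_sub_clamp (X 0 ω)
    rw [integral_zero] at hlim
    exact (hlim.eventually (eventually_le_nhds hδ)).exists
  -- start the main argument
  refine tendstoInMeasure_iff_dist.2 ?_
  intro ε hε
  refine ENNReal.tendsto_nhds_zero.2 fun η hη => ?_
  set r : ℝ := (min η 1).toReal with hr
  have hrne : min η 1 ≠ ⊤ := ne_top_of_le_ne_top ENNReal.one_ne_top (min_le_right _ _)
  have hr0 : 0 < r := ENNReal.toReal_pos (lt_min hη zero_lt_one).ne' hrne
  have hr1 : r ≤ 1 := by
    rw [hr]
    calc (min η 1).toReal ≤ (1 : ℝ≥0∞).toReal :=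
          ENNReal.toReal_mono ENNReal.one_ne_top (min_le_right _ _)
      _ = 1 := by simp
  have hofr : ENNReal.ofReal r ≤ η := by
    rw [hr, ENNReal.ofReal_toReal hrne]
    exact min_le_left _ _
  set δ : ℝ := (ε / 3) * (r / 2) / (M + 1) with hδdef
  have hM1 : (0:ℝ) < M + 1 := by linarith
  have hδ0 : 0 < δ := by positivity
  have hδM : δ * (M + 1) = (ε / 3) * (r / 2) := by
    field_simp [hδdef]
    have : δ * (M + 1) = ε / 3 * (r / 2) := by rw [hδdef]; exact div_mul_cancel₀ _ hM1.ne'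
    linear_combination 6 * this
  obtain ⟨c, hc⟩ := htrunc δ hδ0
  -- truncated variables
  set cr : ℝ := (c : ℝ) with hcr
  have hcr0 : (0:ℝ) ≤ cr := Nat.cast_nonneg c
  set φ : ℝ → ℝ := fun x => max (-cr) (min cr x) with hφ
  have hφm : Measurable φ := (continuous_clamp cr).measurable
  set Y : ℕ → Ω → ℝ := fun k ω => φ (X k ω) with hY
  have hYmeas : ∀ k, Measurable (Y k) := fun k => hφm.comp (hmeas k)
  have hYbd : ∀ k ω, |Y k ω| ≤ cr := fun k ω => abs_clamp_le hcr0
  have hY2 : ∀ k, MemLp (Y k) 2 P := fun k =>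
    (memLp_top_of_bound (hYmeas k).aestronglyMeasurable cr
      (Filter.Eventually.of_forall fun ω => by
        simpa [Real.norm_eq_abs] using hYbd k ω)).mono_exponent le_top
  have hintY : ∀ k, Integrable (Y k) P := fun k => memLp_one_iff_integrable.1
    ((hY2 k).mono_exponent (by norm_num))
  set m : ℝ := ∫ ω, Y 0 ω ∂P with hm
  have hYident : ∀ k, IdentDistrib (Y k) (Y 0) P P := fun k => (idk k).comp hφm
  have hmY : ∀ k, ∫ ω, Y k ω ∂P = m := fun k => (hYident k).integral_eq
  set W : ℕ → Ω → ℝ := fun k ω => Y k ω - m with hW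
  have hWmeas : ∀ k, Measurable (W k) := fun k => (hYmeas k).sub measurable_const
  have hW2 : ∀ k, MemLp (W k) 2 P := fun k => (hY2 k).sub (memLp_const m)
  have hintW : ∀ k, Integrable (W k) P := fun k => (hintY k).sub (integrable_const m)
  have hWint0 : ∀ k, ∫ ω, W k ω ∂P = 0 := by
    intro k
    rw [hW]
    simp only
    rw [integral_sub (hintY k) (integrable_const m), hmY k, integral_const]
    simp
  have hWident : ∀ k, IdentDistrib (W k) (W 0) P P := by
    intro k
    have hfc : ∀ j, W j = (fun x => φ x - m) ∘ X j := fun j => rfl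
    rw [hfc k, hfc 0]
    exact (idk k).comp (hφm.sub measurable_const)
  have hWbd : ∀ k ω, |W k ω| ≤ cr + |m| := by
    intro k ω
    calc |W k ω| ≤ |Y k ω| + |m| := abs_sub _ _
      _ ≤ cr + |m| := by have := hYbd k ω; linarith
  have hindepW : iIndepFun W P :=
    hindep.comp (fun k x => φ x - m) fun k => hφm.sub measurable_const
  set σ2 : ℝ := variance (W 0) P with hσ2
  have hσ20 : 0 ≤ σ2 := hσ2 ▸ variance_nonneg _ _
  set d : ℝ := ∫ ω, |X 0 ω - Y 0 ω| ∂P with hd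
  have hintXY : ∀ k, Integrable (fun ω => X k ω - Y k ω) P := fun k =>
    (hintX k).sub (hintY k)
  have hd0 : 0 ≤ d := integral_nonneg fun ω => abs_nonneg _
  have hdδ : d ≤ δ := hc
  have hDXY : ∀ k, ∫⁻ ω, ENNReal.ofReal |X k ω - Y k ω| ∂P = ENNReal.ofReal d := by
    intro k
    have hg : Measurable fun x : ℝ => ENNReal.ofReal |x - φ x| :=
      ((measurable_id.sub hφm).abs).ennreal_ofReal
    have e1 : ∫⁻ ω, ENNReal.ofReal |X k ω - Y k ω| ∂P
        = ∫⁻ ω, ENNReal.ofReal |X 0 ω - Y 0 ω| ∂P := by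
      calc ∫⁻ ω, ENNReal.ofReal |X k ω - Y k ω| ∂P
          = ∫⁻ x, ENNReal.ofReal |x - φ x| ∂(P.map (X k)) := (lintegral_map hg (hmeas k)).symm
        _ = ∫⁻ x, ENNReal.ofReal |x - φ x| ∂(P.map (X 0)) := by rw [hident k]
        _ = _ := lintegral_map hg (hmeas 0)
    rw [e1, hd, ← ofReal_integral_eq_lintegral_ofReal (hintXY 0).abs
      (Filter.Eventually.of_forall fun ω => abs_nonneg _)]
  -- the three pieces
  set A : ℕ → Ω → ℝ := fun n ω => ∑' k, a n k * (X k ω - Y k ω) with hA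
  set B : ℕ → Ω → ℝ := fun n ω => ∑' k, a n k * W k ω with hB
  -- A is AE-measurable, B is measurable
  have habY : ∀ n ω, Summable fun k => |a n k * Y k ω| := by
    intro n ω
    refine Summable.of_nonneg_of_le (fun k => abs_nonneg _) (fun k => ?_)
      ((hsummable n).mul_right cr)
    rw [abs_mul]
    exact mul_le_mul_of_nonneg_left (hYbd k ω) (abs_nonneg _)
  have habW : ∀ n ω, Summable fun k => |a n k * W k ω| := by
    intro n ω
    refine Summable.of_nonneg_of_le (fun k => abs_nonneg _) (fun k => ?_)
      ((hsummable n).mul_right (cr + |m|))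
    rw [abs_mul]
    exact mul_le_mul_of_nonneg_left (hWbd k ω) (abs_nonneg _)
  have habXY : ∀ n ω, (Summable fun k => |a n k * X k ω|) →
      Summable fun k => |a n k * (X k ω - Y k ω)| := by
    intro n ω hab
    refine Summable.of_nonneg_of_le (fun k => abs_nonneg _) (fun k => ?_)
      (hab.add (habY n ω))
    rw [mul_sub]
    exact abs_sub _ _
  have hAmeas : ∀ n, AEMeasurable (A n) P := by
    intro n
    refine aemeasurable_of_tendsto_metrizable_ae' (μ := P)
      (f := fun N ω => ∑ k ∈ Finset.range N, a n k * (X k ω - Y k ω)) ?_ ?_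
    · exact fun N => (Finset.measurable_sum _ fun k _ =>
        ((hmeas k).sub (hYmeas k)).const_mul _).aemeasurable
    · filter_upwards [hsumae n] with ω hab
      exact ((habXY n ω hab).of_abs).hasSum.tendsto_sum_nat
  have hBmeas : ∀ n, Measurable (B n) := by
    intro n
    refine measurable_of_tendsto_metrizable
      (f := fun N ω => ∑ k ∈ Finset.range N, a n k * W k ω)
      (fun N => Finset.measurable_sum _ fun k _ => (hWmeas k).const_mul _) ?_
    rw [tendsto_pi_nhds]
    intro ω
    exact ((habW n ω).of_abs).hasSum.tendsto_sum_nat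
  -- a.e. decomposition
  have hdecomp : ∀ n, ∀ᵐ ω ∂P,
      (∑' k, a n k * X k ω) - μ = A n ω + B n ω + ((∑' k, a n k) * m - μ) := by
    intro n
    filter_upwards [hsumae n] with ω hab
    have sX : Summable fun k => a n k * X k ω := hab.of_abs
    have sY : Summable fun k => a n k * Y k ω := (habY n ω).of_abs
    have sW : Summable fun k => a n k * W k ω := (habW n ω).of_abs
    have sXY : Summable fun k => a n k * (X k ω - Y k ω) := (habXY n ω hab).of_abs
    have sa : Summable fun k => a n k := (hsummable n).of_abs
    have e1 : (∑' k, a n k * X k ω)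
        = (∑' k, a n k * (X k ω - Y k ω)) + ∑' k, a n k * Y k ω := by
      rw [← Summable.tsum_add sXY sY]
      refine tsum_congr fun k => by ring
    have e2 : (∑' k, a n k * Y k ω) = (∑' k, a n k * W k ω) + (∑' k, a n k) * m := by
      rw [← tsum_mul_right, ← Summable.tsum_add sW (sa.mul_right m)]
      refine tsum_congr fun k => ?_
      rw [hW]
      ring
    rw [e1, e2, hA, hB]
    ring
  -- bound for A
  have hAbound : ∀ n, ∫⁻ ω, ENNReal.ofReal |A n ω| ∂P ≤ ENNReal.ofReal (M * d) := by
    intro n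
    have hstep : ∀ᵐ ω ∂P, ENNReal.ofReal |A n ω|
        ≤ ∑' k, ENNReal.ofReal |a n k * (X k ω - Y k ω)| := by
      filter_upwards [hsumae n] with ω hab
      have hXY := habXY n ω hab
      have hnorm : Summable fun k => ‖a n k * (X k ω - Y k ω)‖ := by
        simpa only [Real.norm_eq_abs] using hXY
      have h1' := norm_tsum_le_tsum_norm hnorm
      simp only [Real.norm_eq_abs] at h1'
      calc ENNReal.ofReal |A n ω|
          ≤ ENNReal.ofReal (∑' k, |a n k * (X k ω - Y k ω)|) := ENNReal.ofReal_le_ofReal h1'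
        _ = ∑' k, ENNReal.ofReal |a n k * (X k ω - Y k ω)| :=
            ENNReal.ofReal_tsum_of_nonneg (fun k => abs_nonneg _) hXY
    calc ∫⁻ ω, ENNReal.ofReal |A n ω| ∂P
        ≤ ∫⁻ ω, ∑' k, ENNReal.ofReal |a n k * (X k ω - Y k ω)| ∂P := lintegral_mono_ae hstep
      _ = ∑' k, ∫⁻ ω, ENNReal.ofReal |a n k * (X k ω - Y k ω)| ∂P :=
          lintegral_tsum fun k =>
            (((((hmeas k).sub (hYmeas k)).const_mul _).abs).ennreal_ofReal).aemeasurable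
      _ = ∑' k, ENNReal.ofReal |a n k| * ENNReal.ofReal d := by
          refine tsum_congr fun k => ?_
          rw [← hDXY k, ← lintegral_const_mul _ (f := fun ω => ENNReal.ofReal |X k ω - Y k ω|) (((hmeas k).sub (hYmeas k)).abs).ennreal_ofReal]
          congr 1; funext ω
          rw [abs_mul, ENNReal.ofReal_mul (abs_nonneg _)]
      _ = ENNReal.ofReal (∑' k, |a n k|) * ENNReal.ofReal d := by
          rw [ENNReal.tsum_mul_right,
            ENNReal.ofReal_tsum_of_nonneg (fun k => abs_nonneg _) (hsummable n)]
      _ ≤ ENNReal.ofReal M * ENNReal.ofReal d :=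
          mul_le_mul_left (ENNReal.ofReal_le_ofReal (h3 n)) _
      _ = ENNReal.ofReal (M * d) := (ENNReal.ofReal_mul hM0).symm
  -- bound for B
  have hBbound : ∀ n, ∫⁻ ω, (ENNReal.ofReal |B n ω|) ^ 2 ∂P
      ≤ ENNReal.ofReal (σ2 * ((⨆ k, |a n k|) * M)) := by
    intro n
    have hbdd : BddAbove (Set.range fun k => |a n k|) := by
      refine ⟨∑' k, |a n k|, ?_⟩
      rintro _ ⟨k, rfl⟩
      exact Summable.le_tsum (hsummable n) k fun j _ => abs_nonneg _
    have hTk : ∀ k, |a n k| ≤ ⨆ k, |a n k| := fun k => le_ciSup hbdd k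
    have hT0 : 0 ≤ ⨆ k, |a n k| := le_trans (abs_nonneg _) (hTk 0)
    set T : ℝ := ⨆ k, |a n k| with hT
    have hsW : ∀ ω, Summable fun k => a n k * W k ω := fun ω => (habW n ω).of_abs
    set Z : ℕ → Ω → ℝ := fun k ω => a n k * W k ω with hZ
    set s : ℕ → Ω → ℝ := fun N => ∑ k ∈ Finset.range N, Z k with hs
    have hsapp : ∀ N ω, s N ω = ∑ k ∈ Finset.range N, a n k * W k ω := by
      intro N ω
      rw [hs]
      simp [hZ]
    have hsfun : ∀ N, s N = fun ω => ∑ k ∈ Finset.range N, a n k * W k ω :=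
      fun N => funext (hsapp N)
    have hsmeas : ∀ N, Measurable (s N) := by
      intro N
      rw [hsfun N]
      exact Finset.measurable_sum _ fun k _ => (hWmeas k).const_mul _
    have hZ2 : ∀ k, MemLp (Z k) 2 P := fun k => (hW2 k).const_mul (a n k)
    have hs2 : ∀ N, MemLp (s N) 2 P := fun N => memLp_finsetSum' _ fun k _ => hZ2 k
    have htend : ∀ ω, Tendsto (fun N => s N ω) atTop (𝓝 (B n ω)) := by
      intro ω
      refine ((hsW ω).hasSum.tendsto_sum_nat).congr fun N => ?_
      rw [hsapp]
    have hstep : ∫⁻ ω, (ENNReal.ofReal |B n ω|) ^ 2 ∂P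
        ≤ liminf (fun N => ∫⁻ ω, (ENNReal.ofReal |s N ω|) ^ 2 ∂P) atTop := by
      have hpt : ∀ ω, (ENNReal.ofReal |B n ω|) ^ 2
          = liminf (fun N => (ENNReal.ofReal |s N ω|) ^ 2) atTop := by
        intro ω
        have h1' : Tendsto (fun N => ENNReal.ofReal |s N ω|) atTop
            (𝓝 (ENNReal.ofReal |B n ω|)) :=
          ENNReal.tendsto_ofReal ((continuous_abs.tendsto _).comp (htend ω))
        exact (((ENNReal.continuous_pow 2).tendsto _).comp h1').liminf_eq.symm
      calc ∫⁻ ω, (ENNReal.ofReal |B n ω|) ^ 2 ∂P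
          = ∫⁻ ω, liminf (fun N => (ENNReal.ofReal |s N ω|) ^ 2) atTop ∂P :=
            lintegral_congr hpt
        _ ≤ liminf (fun N => ∫⁻ ω, (ENNReal.ofReal |s N ω|) ^ 2 ∂P) atTop :=
            lintegral_liminf_le fun N => ((hsmeas N).abs.ennreal_ofReal).pow_const 2
    refine hstep.trans (liminf_le_of_frequently_le' (Frequently.of_forall fun N => ?_))
    have hEs : ∫ ω, s N ω ∂P = 0 := by
      have hEs1 : ∫ ω, s N ω ∂P = ∑ k ∈ Finset.range N, ∫ ω, a n k * W k ω ∂P := by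
        rw [hsfun N]
        exact integral_finset_sum _ fun k _ => (hintW k).const_mul (a n k)
      rw [hEs1]
      refine Finset.sum_eq_zero fun k _ => ?_
      rw [integral_const_mul, hWint0 k, mul_zero]
    have hindepZ : iIndepFun Z P :=
      hindepW.comp (fun k x => a n k * x) fun k => measurable_id.const_mul _
    have hvar : variance (s N) P = ∑ k ∈ Finset.range N, (a n k) ^ 2 * σ2 := by
      rw [hs, IndepFun.variance_sum (fun k _ => hZ2 k)
        (fun i _ j _ hij => hindepZ.indepFun hij)]
      refine Finset.sum_congr rfl fun k _ => ?_
      rw [hZ, variance_const_mul, (hWident k).variance_eq, hσ2]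
    have hsq : ∫ ω, (s N ω) ^ 2 ∂P = variance (s N) P := by
      have hvd := variance_eq_sub (hs2 N)
      rw [hEs] at hvd
      simp only [Pi.pow_apply] at hvd
      rw [hvd]
      ring
    have hsumbd : ∑ k ∈ Finset.range N, (a n k) ^ 2 * σ2 ≤ σ2 * (T * M) := by
      have h4 : ∑ k ∈ Finset.range N, (a n k) ^ 2 * σ2
          ≤ ∑ k ∈ Finset.range N, T * |a n k| * σ2 := by
        refine Finset.sum_le_sum fun k _ => ?_
        refine mul_le_mul_of_nonneg_right ?_ hσ20
        rw [← sq_abs, sq]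
        exact mul_le_mul_of_nonneg_right (hTk k) (abs_nonneg _)
      have h5 : ∑ k ∈ Finset.range N, T * |a n k| * σ2
          = T * σ2 * ∑ k ∈ Finset.range N, |a n k| := by
        rw [Finset.mul_sum]
        exact Finset.sum_congr rfl fun k _ => by ring
      have h6 : ∑ k ∈ Finset.range N, |a n k| ≤ M :=
        le_trans ((hsummable n).sum_le_tsum _ (fun k _ => abs_nonneg _)) (h3 n)
      calc ∑ k ∈ Finset.range N, (a n k) ^ 2 * σ2
          ≤ T * σ2 * ∑ k ∈ Finset.range N, |a n k| := by rw [← h5]; exact h4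
        _ ≤ T * σ2 * M := mul_le_mul_of_nonneg_left h6 (mul_nonneg hT0 hσ20)
        _ = σ2 * (T * M) := by ring
    calc ∫⁻ ω, (ENNReal.ofReal |s N ω|) ^ 2 ∂P
        = ∫⁻ ω, ENNReal.ofReal ((s N ω) ^ 2) ∂P := by
          refine lintegral_congr fun ω => ?_
          rw [← ENNReal.ofReal_pow (abs_nonneg _), sq_abs]
      _ = ENNReal.ofReal (∫ ω, (s N ω) ^ 2 ∂P) :=
          (ofReal_integral_eq_lintegral_ofReal (hs2 N).integrable_sq
            (Filter.Eventually.of_forall fun ω => sq_nonneg _)).symm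
      _ ≤ ENNReal.ofReal (σ2 * (T * M)) := by
          refine ENNReal.ofReal_le_ofReal ?_
          rw [hsq, hvar]
          exact hsumbd
  -- probability bound for the A-part
  have hAprob : ∀ n, P {ω | ε / 3 ≤ |A n ω|} ≤ ENNReal.ofReal (r / 2) := by
    intro n
    have hε3 : (0:ℝ) < ε / 3 := by linarith
    have hsetA : {ω | ε / 3 ≤ |A n ω|}
        = {ω | ENNReal.ofReal (ε / 3) ≤ ENNReal.ofReal |A n ω|} := by
      ext ω
      simp [ENNReal.ofReal_le_ofReal_iff (abs_nonneg (A n ω))]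
    have hAm : AEMeasurable (fun ω => ENNReal.ofReal |A n ω|) P :=
      ENNReal.measurable_ofReal.comp_aemeasurable (measurable_abs.comp_aemeasurable (hAmeas n))
    calc P {ω | ε / 3 ≤ |A n ω|}
        ≤ (∫⁻ ω, ENNReal.ofReal |A n ω| ∂P) / ENNReal.ofReal (ε / 3) := by
          rw [hsetA]
          exact meas_ge_le_lintegral_div hAm (by simp [hε3]) ENNReal.ofReal_ne_top
      _ ≤ ENNReal.ofReal (M * d) / ENNReal.ofReal (ε / 3) :=
          ENNReal.div_le_div_right (hAbound n) _
      _ = ENNReal.ofReal (M * d / (ε / 3)) := (ENNReal.ofReal_div_of_pos hε3).symm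
      _ ≤ ENNReal.ofReal (r / 2) := by
          refine ENNReal.ofReal_le_ofReal ?_
          rw [div_le_iff₀ hε3]
          nlinarith [hdδ, hd0, hδM, hδ0]
  -- probability bound for the B-part (eventually in n)
  have hBprob : ∀ᶠ n in atTop, P {ω | ε / 3 ≤ |B n ω|} ≤ ENNReal.ofReal (r / 2) := by
    have hε3 : (0:ℝ) < ε / 3 := by linarith
    have hv : Tendsto (fun n => σ2 * ((⨆ k, |a n k|) * M) / (ε / 3) ^ 2) atTop (𝓝 0) := by
      have := ((hmax.mul_const M).const_mul σ2).div_const ((ε / 3) ^ 2)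
      simpa using this
    filter_upwards [hv.eventually_le_const (by positivity : (0:ℝ) < r / 2)] with n hn
    have hsetB : {ω | ε / 3 ≤ |B n ω|}
        ⊆ {ω | (ENNReal.ofReal (ε / 3)) ^ 2 ≤ (ENNReal.ofReal |B n ω|) ^ 2} := by
      intro ω hω
      exact pow_le_pow_left' (ENNReal.ofReal_le_ofReal hω) 2
    have hBm : AEMeasurable (fun ω => (ENNReal.ofReal |B n ω|) ^ 2) P :=
      (((hBmeas n).abs.ennreal_ofReal).pow_const 2).aemeasurable
    calc P {ω | ε / 3 ≤ |B n ω|}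
        ≤ P {ω | (ENNReal.ofReal (ε / 3)) ^ 2 ≤ (ENNReal.ofReal |B n ω|) ^ 2} :=
          measure_mono hsetB
      _ ≤ (∫⁻ ω, (ENNReal.ofReal |B n ω|) ^ 2 ∂P) / (ENNReal.ofReal (ε / 3)) ^ 2 :=
          meas_ge_le_lintegral_div hBm (by simp [hε3, pow_eq_zero_iff]) (by
            exact ENNReal.pow_ne_top ENNReal.ofReal_ne_top)
      _ ≤ ENNReal.ofReal (σ2 * ((⨆ k, |a n k|) * M)) / ENNReal.ofReal ((ε / 3) ^ 2) := by
          rw [← ENNReal.ofReal_pow hε3.le]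
          exact ENNReal.div_le_div_right (hBbound n) _
      _ = ENNReal.ofReal (σ2 * ((⨆ k, |a n k|) * M) / (ε / 3) ^ 2) :=
          (ENNReal.ofReal_div_of_pos (by positivity)).symm
      _ ≤ ENNReal.ofReal (r / 2) := ENNReal.ofReal_le_ofReal hn
  -- the constant part is eventually small
  have hmμ : |m - μ| ≤ d := by
    have e1 : m - μ = ∫ ω, (Y 0 ω - X 0 ω) ∂P := by
      rw [integral_sub (hintY 0) hint, hmean]
    rw [e1]
    calc |∫ ω, (Y 0 ω - X 0 ω) ∂P| ≤ ∫ ω, |Y 0 ω - X 0 ω| ∂P := by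
          simpa [Real.norm_eq_abs] using
            norm_integral_le_integral_norm (μ := P) (fun ω => Y 0 ω - X 0 ω)
      _ = d := by
          rw [hd]
          exact integral_congr_ae (Filter.Eventually.of_forall fun ω => abs_sub_comm _ _)
  have hδε : δ < ε / 3 := by nlinarith [hδM]
  have hCev : ∀ᶠ n in atTop, |(∑' k, a n k) * m - μ| < ε / 3 := by
    have hCt : Tendsto (fun n => (∑' k, a n k) * m - μ) atTop (𝓝 (m - μ)) := by
      have := (h2.mul_const m).sub_const μ
      simpa using this
    have habs : Tendsto (fun n => |(∑' k, a n k) * m - μ|) atTop (𝓝 |m - μ|) :=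
      (continuous_abs.tendsto _).comp hCt
    exact habs.eventually_lt_const (by linarith [hmμ, hdδ] : |m - μ| < ε / 3)
  -- final combination
  filter_upwards [hBprob, hCev] with n hBn hCn
  have hincl : ∀ᵐ ω ∂P, ω ∈ {ω | ε ≤ dist (∑' k, a n k * X k ω) μ} →
      ω ∈ ({ω | ε / 3 ≤ |A n ω|} ∪ {ω | ε / 3 ≤ |B n ω|}) := by
    filter_upwards [hdecomp n] with ω hdec hmem
    simp only [Set.mem_setOf_eq, Real.dist_eq] at hmem
    by_contra hcon
    simp only [Set.mem_union, Set.mem_setOf_eq, not_or, not_le] at hcon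
    have habs : |(∑' k, a n k * X k ω) - μ| ≤ |A n ω| + |B n ω| + |(∑' k, a n k) * m - μ| := by
      rw [hdec]
      exact (abs_add_three _ _ _)
    linarith [hcon.1, hcon.2, hCn]
  calc P {ω | ε ≤ dist (∑' k, a n k * X k ω) μ}
      ≤ P ({ω | ε / 3 ≤ |A n ω|} ∪ {ω | ε / 3 ≤ |B n ω|}) := by
        refine measure_mono_ae ?_
        exact hincl
    _ ≤ P {ω | ε / 3 ≤ |A n ω|} + P {ω | ε / 3 ≤ |B n ω|} := measure_union_le _ _
    _ ≤ ENNReal.ofReal (r / 2) + ENNReal.ofReal (r / 2) := add_le_add (hAprob n) hBn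
    _ = ENNReal.ofReal r := by
        rw [← ENNReal.ofReal_add (by positivity) (by positivity)]
        norm_num
    _ ≤ η := hofr
end

section
/- Let $X_1, X_2, \dots$ be i.i.d. random variables with $E|X_k| < \infty$ and $E[X_k] = \mu$, independent of the random weights $R_1, \dots, R_n$ (spacings of a uniform sample on $[0,1]$, which are nonnegative and sum to 1). If $\max_i R_i \to 0$ almost surely, then the randomly weighted average $S_n = \sum_{i=1}^n R_i X_i$ converges to $\mu$ in probability as $n \to \infty$. -/
open MeasureTheory ProbabilityTheory Filter Topology

namespace Stmt3Aux

noncomputable def tr (M x : ℝ) : ℝ := if |x| ≤ M then x else 0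

lemma tr_meas (M : ℝ) : Measurable (tr M) := by
  unfold tr
  exact Measurable.ite (measurableSet_le measurable_abs measurable_const)
    measurable_id measurable_const

lemma abs_tr_le {M : ℝ} (hM : 0 ≤ M) (x : ℝ) : |tr M x| ≤ M := by
  unfold tr; split
  · assumption
  · simpa using hM

lemma abs_sub_tr_le (M x : ℝ) : |x - tr M x| ≤ |x| := by
  unfold tr; split <;> simp [abs_nonneg]

lemma tr_eq_of {M x : ℝ} (h : |x| ≤ M) : tr M x = x := if_pos h

variable {Ω : Type*} [MeasurableSpace Ω] {P : Measure Ω} [IsProbabilityMeasure P]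

lemma integrable_of_bdd {f : Ω → ℝ} (hf : Measurable f) {C : ℝ} (h : ∀ ω, |f ω| ≤ C) :
    Integrable f P :=
  (memLp_top_of_bound hf.aestronglyMeasurable C
    (Filter.Eventually.of_forall (by simpa [Real.norm_eq_abs] using h))).integrable le_top

lemma mul_indep {n : ℕ} {R : Fin n → Ω → ℝ} {X : ℕ → Ω → ℝ}
    (hR : ∀ i, Measurable (R i)) (hX : ∀ k, Measurable (X k))
    (hRX : IndepFun (fun ω (i : Fin n) => R i ω) (fun ω (k : ℕ) => X k ω) P)
    {f : (Fin n → ℝ) → ℝ} {g : (ℕ → ℝ) → ℝ} (hf : Measurable f) (hg : Measurable g) :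
    ∫ ω, f (fun i => R i ω) * g (fun k => X k ω) ∂P
      = (∫ ω, f (fun i => R i ω) ∂P) * ∫ ω, g (fun k => X k ω) ∂P := by
  have h1 : Measurable (fun ω => f (fun i => R i ω)) :=
    hf.comp (measurable_pi_lambda _ hR)
  have h2 : Measurable (fun ω => g (fun k => X k ω)) :=
    hg.comp (measurable_pi_lambda _ hX)
  exact (hRX.comp hf hg).integral_fun_mul_eq_mul_integral h1.aestronglyMeasurable h2.aestronglyMeasurable

lemma ident_integral {X : ℕ → Ω → ℝ} (hXmeas : ∀ k, Measurable (X k))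
    (hident : ∀ k, Measure.map (X k) P = Measure.map (X 0) P)
    {h : ℝ → ℝ} (hh : Measurable h) (k : ℕ) :
    ∫ ω, h (X k ω) ∂P = ∫ ω, h (X 0 ω) ∂P := by
  rw [← integral_map (hXmeas k).aemeasurable hh.aestronglyMeasurable, hident k,
      integral_map (hXmeas 0).aemeasurable hh.aestronglyMeasurable]

lemma ident_integrable {X : ℕ → Ω → ℝ} (hXmeas : ∀ k, Measurable (X k))
    (hident : ∀ k, Measure.map (X k) P = Measure.map (X 0) P)
    (hint : Integrable (X 0) P) (k : ℕ) : Integrable (X k) P := by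
  have h0 : Integrable id (Measure.map (X 0) P) :=
    (integrable_map_measure aestronglyMeasurable_id (hXmeas 0).aemeasurable).mpr hint
  rw [← hident k] at h0
  exact (integrable_map_measure aestronglyMeasurable_id (hXmeas k).aemeasurable).mp h0

end Stmt3Aux

set_option maxHeartbeats 1000000 in
/-- If `X` is an i.i.d. sequence with finite mean `μ`, and for each `n` the
random weights `R n 1, …, R n n` are nonnegative, sum to `1`, are independent
of the sequence `X`, and the maximal weight tends to `0` almost surely, then
the randomly weighted average `Sₙ = ∑ i, R n i * X i` tends to `μ`
in probability. -/
theorem stmt3 {Ω : Type*} [MeasurableSpace Ω] (P : Measure Ω) [IsProbabilityMeasure P]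
    (X : ℕ → Ω → ℝ) (μ : ℝ)
    (hXmeas : ∀ k, Measurable (X k))
    (hindep : iIndepFun X P)
    (hident : ∀ k, Measure.map (X k) P = Measure.map (X 0) P)
    (hint : Integrable (X 0) P)
    (hmean : ∫ ω, X 0 ω ∂P = μ)
    (R : (n : ℕ) → Fin n → Ω → ℝ)
    (hRmeas : ∀ n i, Measurable (R n i))
    (hRnonneg : ∀ n i ω, 0 ≤ R n i ω)
    (hRsum : ∀ n, 0 < n → ∀ ω, ∑ i : Fin n, R n i ω = 1)
    (hRindep : ∀ n, IndepFun (fun ω => fun i : Fin n => R n i ω)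
      (fun ω => fun k : ℕ => X k ω) P)
    (hmax : ∀ᵐ ω ∂P, Tendsto (fun n => ⨆ i : Fin n, R n i ω) atTop (nhds 0)) :
    TendstoInMeasure P (fun n ω => ∑ i : Fin n, R n i ω * X i ω) atTop
      (fun _ => μ) := by
  classical
  have hXk_int : ∀ k, Integrable (X k) P := Stmt3Aux.ident_integrable hXmeas hident hint
  set g : ℕ → Ω → ℝ := fun n ω => ⨆ i : Fin n, R n i ω with hg_def
  have hg_meas : ∀ n, Measurable (g n) := fun n => Measurable.iSup (fun i => hRmeas n i)
  have hR_le_one : ∀ n (i : Fin n) ω, R n i ω ≤ 1 := by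
    intro n i ω
    have h := Finset.single_le_sum (f := fun j : Fin n => R n j ω)
      (fun j _ => hRnonneg n j ω) (Finset.mem_univ i)
    rwa [hRsum n i.pos ω] at h
  have hg_nonneg : ∀ n ω, 0 ≤ g n ω := fun n ω => Real.iSup_nonneg (fun i => hRnonneg n i ω)
  have hg_le_one : ∀ n ω, g n ω ≤ 1 := fun n ω =>
    Real.iSup_le (fun i => hR_le_one n i ω) zero_le_one
  have hR_le_g : ∀ n (i : Fin n) ω, R n i ω ≤ g n ω := fun n i ω =>
    le_ciSup (f := fun i : Fin n => R n i ω) (Set.Finite.bddAbove (Set.finite_range _)) i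
  have hg_int : ∀ n, Integrable (g n) P := fun n =>
    Stmt3Aux.integrable_of_bdd (hg_meas n) (C := 1)
      (fun ω => abs_le.2 ⟨by linarith [hg_nonneg n ω], hg_le_one n ω⟩)
  have hg_tendsto : Tendsto (fun n => ∫ ω, g n ω ∂P) atTop (𝓝 0) := by
    have h := tendsto_integral_of_dominated_convergence (μ := P) (F := g)
      (f := fun _ => (0:ℝ)) (bound := fun _ => (1:ℝ))
      (fun n => (hg_meas n).aestronglyMeasurable) (integrable_const 1)
      (fun n => Filter.Eventually.of_forall (fun ω => by
        rw [Real.norm_eq_abs, abs_of_nonneg (hg_nonneg n ω)]; exact hg_le_one n ω))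
      hmax
    simpa using h
  have hZ_tendsto : Tendsto (fun M : ℕ => ∫ ω, |X 0 ω - Stmt3Aux.tr M (X 0 ω)| ∂P)
      atTop (𝓝 0) := by
    have h := tendsto_integral_of_dominated_convergence (μ := P)
      (F := fun (M : ℕ) ω => |X 0 ω - Stmt3Aux.tr M (X 0 ω)|)
      (f := fun _ => (0:ℝ)) (bound := fun ω => |X 0 ω|)
      (fun M => ((hXmeas 0).sub
        ((Stmt3Aux.tr_meas M).comp (hXmeas 0))).abs.aestronglyMeasurable)
      hint.abs
      (fun M => Filter.Eventually.of_forall (fun ω => by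
        rw [Real.norm_eq_abs, abs_abs]; exact Stmt3Aux.abs_sub_tr_le _ _))
      (Filter.Eventually.of_forall (fun ω => by
        apply tendsto_atTop_of_eventually_const (i₀ := ⌈|X 0 ω|⌉₊)
        intro M hM
        show |X 0 ω - Stmt3Aux.tr (M:ℝ) (X 0 ω)| = 0
        rw [Stmt3Aux.tr_eq_of (le_trans (Nat.le_ceil _) (by exact_mod_cast hM))]
        simp))
    simpa using h
  rw [tendstoInMeasure_iff_dist]
  intro ε hε
  rw [ENNReal.tendsto_nhds_zero]
  intro δ hδ
  obtain ⟨d, hd0, hdδ⟩ : ∃ d : ℝ, 0 < d ∧ ENNReal.ofReal d ≤ δ := by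
    rcases eq_top_or_lt_top δ with h | h
    · exact ⟨1, one_pos, by simp [h]⟩
    · exact ⟨δ.toReal, ENNReal.toReal_pos hδ.ne' h.ne, by rw [ENNReal.ofReal_toReal h.ne]⟩
  obtain ⟨M, hM⟩ :=
    (hZ_tendsto.eventually_lt_const (by positivity : (0:ℝ) < d * ε / 8)).exists
  have hMnn : (0:ℝ) ≤ (M:ℝ) := Nat.cast_nonneg M
  have htr_meas : Measurable (Stmt3Aux.tr (M:ℝ)) := Stmt3Aux.tr_meas _
  have htr_int : ∀ k, Integrable (fun ω => Stmt3Aux.tr M (X k ω)) P := fun k =>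
    Stmt3Aux.integrable_of_bdd (htr_meas.comp (hXmeas k))
      (fun ω => Stmt3Aux.abs_tr_le hMnn _)
  obtain ⟨ν, hν⟩ : ∃ ν : ℝ, ∫ ω, Stmt3Aux.tr M (X 0 ω) ∂P = ν := ⟨_, rfl⟩
  have hν_abs : |ν| ≤ M := by
    rw [← hν]
    have := norm_integral_le_of_norm_le_const (μ := P)
      (C := (M:ℝ)) (f := fun ω => Stmt3Aux.tr M (X 0 ω))
      (Filter.Eventually.of_forall (fun ω => by
        rw [Real.norm_eq_abs]; exact Stmt3Aux.abs_tr_le hMnn _))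
    simpa [Real.norm_eq_abs] using this
  have hEtr : ∀ k, ∫ ω, Stmt3Aux.tr M (X k ω) ∂P = ν := fun k =>
    (Stmt3Aux.ident_integral hXmeas hident htr_meas k).trans hν
  -- centered truncation w and tail z
  set w : ℝ → ℝ := fun t => Stmt3Aux.tr M t - ν with hw_def
  set z : ℝ → ℝ := fun t => t - Stmt3Aux.tr M t with hz_def
  have hw_meas : Measurable w := htr_meas.sub measurable_const
  have hz_meas : Measurable z := measurable_id.sub htr_meas
  have hw_bdd : ∀ t, |w t| ≤ 2 * M := by
    intro t
    have h1 := Stmt3Aux.abs_tr_le hMnn t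
    calc |w t| = |Stmt3Aux.tr M t + (-ν)| := by rw [hw_def]; ring_nf
    _ ≤ |Stmt3Aux.tr M t| + |(-ν)| := abs_add_le _ _
    _ ≤ 2 * M := by rw [abs_neg]; linarith
  have hw_int : ∀ k : ℕ, Integrable (fun ω => w (X k ω)) P := fun k =>
    Stmt3Aux.integrable_of_bdd (hw_meas.comp (hXmeas k)) (fun ω => hw_bdd _)
  have hEw : ∀ k : ℕ, ∫ ω, w (X k ω) ∂P = 0 := by
    intro k
    simp only [hw_def]
    rw [integral_sub (htr_int k) (integrable_const ν), hEtr k, integral_const]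
    simp
  have hz_int : ∀ k : ℕ, Integrable (fun ω => z (X k ω)) P := fun k =>
    (hXk_int k).sub (htr_int k)
  obtain ⟨η, hηdef⟩ : ∃ η : ℝ, ∫ ω, |z (X 0 ω)| ∂P = η := ⟨_, rfl⟩
  have hη_lt : η < d * ε / 8 := by rw [← hηdef]; exact hM
  have hη0 : 0 ≤ η := by
    rw [← hηdef]; exact integral_nonneg (fun ω => abs_nonneg _)
  have hEz : ∀ k : ℕ, ∫ ω, |z (X k ω)| ∂P = η := fun k =>
    (Stmt3Aux.ident_integral hXmeas hident hz_meas.abs k).trans hηdef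
  have hνμ : |ν - μ| ≤ η := by
    have h1 : ∫ ω, z (X 0 ω) ∂P = μ - ν := by
      simp only [hz_def]
      rw [integral_sub (hXk_int 0) (htr_int 0), hmean, hEtr 0]
    have h2 : |∫ ω, z (X 0 ω) ∂P| ≤ ∫ ω, |z (X 0 ω)| ∂P := by
      simpa [Real.norm_eq_abs] using
        norm_integral_le_integral_norm (μ := P) (f := fun ω => z (X 0 ω))
    rw [h1] at h2
    rw [hηdef] at h2
    rw [abs_sub_comm] at h2
    exact h2
  -- cross terms vanish
  have hcross : ∀ i j : ℕ, i ≠ j → ∫ ω, w (X i ω) * w (X j ω) ∂P = 0 := by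
    intro i j hij
    have hXij : IndepFun (X i) (X j) P := hindep.indepFun hij
    have h := (hXij.comp hw_meas hw_meas).integral_fun_mul_eq_mul_integral
      ((hw_meas.comp (hXmeas i)).aestronglyMeasurable)
      ((hw_meas.comp (hXmeas j)).aestronglyMeasurable)
    simp only [Function.comp_def] at h
    rw [h, hEw i, zero_mul]
  set c2 : ℝ := d * ε ^ 2 / (32 * ((M:ℝ) ^ 2 + 1)) with hc2_def
  have hc2pos : 0 < c2 := by positivity
  filter_upwards [eventually_ge_atTop 1, hg_tendsto.eventually_lt_const hc2pos]
    with n hn1 hn2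
  have hn0 : 0 < n := hn1
  -- abbreviations
  set A : Ω → ℝ := fun ω => ∑ i : Fin n, R n i ω * w (X i ω) with hA_def
  set D : Ω → ℝ := fun ω => (∑ i : Fin n, R n i ω * z (X i ω)) + (ν - μ) with hD_def
  have hdecomp : ∀ ω, (∑ i : Fin n, R n i ω * X i ω) - μ = A ω + D ω := by
    intro ω
    have hs := hRsum n hn0 ω
    have h1 : ∀ i : Fin n, R n i ω * X (i:ℕ) ω
        = R n i ω * w (X i ω) + R n i ω * z (X i ω) + R n i ω * ν := by
      intro i; simp only [hw_def, hz_def]; ring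
    have h2 : ∑ i : Fin n, R n i ω * X (i:ℕ) ω
        = (∑ i : Fin n, R n i ω * w (X i ω)) + (∑ i : Fin n, R n i ω * z (X i ω))
          + (∑ i : Fin n, R n i ω) * ν := by
      rw [Finset.sum_mul]
      rw [← Finset.sum_add_distrib, ← Finset.sum_add_distrib]
      exact Finset.sum_congr rfl (fun i _ => h1 i)
    rw [hA_def, hD_def]
    simp only []
    rw [h2, hs]
    ring
  have hA_meas : Measurable A :=
    Finset.measurable_sum _ (fun i _ => (hRmeas n i).mul (hw_meas.comp (hXmeas i)))
  have hA_bdd : ∀ ω, |A ω| ≤ 2 * M := by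
    intro ω
    have hs := hRsum n hn0 ω
    calc |A ω| ≤ ∑ i : Fin n, |R n i ω * w (X i ω)| := Finset.abs_sum_le_sum_abs _ _
    _ ≤ ∑ i : Fin n, R n i ω * (2 * M) := by
        refine Finset.sum_le_sum (fun i _ => ?_)
        rw [abs_mul, abs_of_nonneg (hRnonneg n i ω)]
        exact mul_le_mul_of_nonneg_left (hw_bdd _) (hRnonneg n i ω)
    _ = 2 * M := by rw [← Finset.sum_mul, hs, one_mul]
  have hA_int : Integrable A P := Stmt3Aux.integrable_of_bdd hA_meas hA_bdd
  have hA2_int : Integrable (fun ω => (A ω) ^ 2) P := by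
    refine Stmt3Aux.integrable_of_bdd (hA_meas.pow_const 2) (C := (2*(M:ℝ))^2) (fun ω => ?_)
    rw [abs_pow]
    exact pow_le_pow_left₀ (abs_nonneg _) (hA_bdd ω) 2
  -- integrability of double-sum terms
  have hterm_int : ∀ i j : Fin n, Integrable
      (fun ω => (R n i ω * R n j ω) * (w (X i ω) * w (X j ω))) P := by
    intro i j
    refine Stmt3Aux.integrable_of_bdd
      (((hRmeas n i).mul (hRmeas n j)).mul
        ((hw_meas.comp (hXmeas i)).mul (hw_meas.comp (hXmeas j)))) (C := (2*(M:ℝ))*(2*(M:ℝ)))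
      (fun ω => ?_)
    rw [abs_mul, abs_mul, abs_mul]
    have h1 : |R n i ω| ≤ 1 := abs_le.2 ⟨by linarith [hRnonneg n i ω], hR_le_one n i ω⟩
    have h2 : |R n j ω| ≤ 1 := abs_le.2 ⟨by linarith [hRnonneg n j ω], hR_le_one n j ω⟩
    have h3 := hw_bdd (X i ω); have h4 := hw_bdd (X j ω)
    have h5 := abs_nonneg (R n i ω); have h6 := abs_nonneg (R n j ω)
    have h7 := abs_nonneg (w (X i ω)); have h8 := abs_nonneg (w (X j ω))
    have h9 : |R n i ω| * |R n j ω| ≤ 1 := by nlinarith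
    have h10 : |w (X (i:ℕ) ω)| * |w (X (j:ℕ) ω)| ≤ (2*(M:ℝ))*(2*(M:ℝ)) :=
      mul_le_mul h3 h4 h8 (by positivity)
    calc |R n i ω| * |R n j ω| * (|w (X (i:ℕ) ω)| * |w (X (j:ℕ) ω)|)
        ≤ 1 * ((2*(M:ℝ))*(2*(M:ℝ))) :=
          mul_le_mul h9 h10 (by positivity) zero_le_one
    _ = (2*(M:ℝ))*(2*(M:ℝ)) := one_mul _
  have hA2_eq : ∫ ω, (A ω) ^ 2 ∂P
      = ∑ i : Fin n, ∑ j : Fin n,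
        (∫ ω, R n i ω * R n j ω ∂P) * ∫ ω, w (X i ω) * w (X j ω) ∂P := by
    have h1 : ∀ ω, (A ω) ^ 2 = ∑ i : Fin n, ∑ j : Fin n,
        (R n i ω * R n j ω) * (w (X i ω) * w (X j ω)) := by
      intro ω
      rw [hA_def]
      simp only []
      rw [sq, Finset.sum_mul_sum]
      exact Finset.sum_congr rfl fun i _ => Finset.sum_congr rfl fun j _ => by ring
    rw [integral_congr_ae (Filter.Eventually.of_forall h1)]
    rw [integral_finset_sum _ (fun i _ => integrable_finset_sum _ (fun j _ => hterm_int i j))]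
    refine Finset.sum_congr rfl fun i _ => ?_
    rw [integral_finset_sum _ (fun j _ => hterm_int i j)]
    refine Finset.sum_congr rfl fun j _ => ?_
    exact Stmt3Aux.mul_indep (hRmeas n) hXmeas (hRindep n)
      (f := fun v => v i * v j) (g := fun x => w (x i) * w (x j))
      ((measurable_pi_apply i).mul (measurable_pi_apply j))
      ((hw_meas.comp (measurable_pi_apply (i:ℕ))).mul
        (hw_meas.comp (measurable_pi_apply (j:ℕ))))
  have hRR_int : ∀ i j : Fin n, Integrable (fun ω => R n i ω * R n j ω) P := by
    intro i j
    refine Stmt3Aux.integrable_of_bdd ((hRmeas n i).mul (hRmeas n j)) (C := 1) (fun ω => ?_)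
    rw [abs_mul]
    have h1 : |R n i ω| ≤ 1 := abs_le.2 ⟨by linarith [hRnonneg n i ω], hR_le_one n i ω⟩
    have h2 : |R n j ω| ≤ 1 := abs_le.2 ⟨by linarith [hRnonneg n j ω], hR_le_one n j ω⟩
    nlinarith [abs_nonneg (R n i ω), abs_nonneg (R n j ω)]
  have hA2_le : ∫ ω, (A ω) ^ 2 ∂P ≤ 4 * (M:ℝ) ^ 2 * ∫ ω, g n ω ∂P := by
    rw [hA2_eq]
    have hdiag : ∀ i : Fin n, ∑ j : Fin n,
        (∫ ω, R n i ω * R n j ω ∂P) * ∫ ω, w (X i ω) * w (X j ω) ∂P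
        = (∫ ω, R n i ω * R n i ω ∂P) * ∫ ω, w (X i ω) * w (X i ω) ∂P := by
      intro i
      refine Finset.sum_eq_single_of_mem i (Finset.mem_univ i) (fun j _ hji => ?_)
      rw [hcross i j (fun h => hji (Fin.val_injective h).symm), mul_zero]
    rw [Finset.sum_congr rfl (fun i _ => hdiag i)]
    have hstep : ∀ i : Fin n,
        (∫ ω, R n i ω * R n i ω ∂P) * ∫ ω, w (X i ω) * w (X i ω) ∂P
        ≤ (∫ ω, R n i ω * R n i ω ∂P) * (4 * (M:ℝ) ^ 2) := by
      intro i
      have hww : ∫ ω, w (X i ω) * w (X i ω) ∂P ≤ 4 * (M:ℝ) ^ 2 := by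
        have hb : ∀ ω, w (X (i:ℕ) ω) * w (X (i:ℕ) ω) ≤ 4 * (M:ℝ) ^ 2 := fun ω => by
          have := hw_bdd (X (i:ℕ) ω)
          nlinarith [abs_nonneg (w (X (i:ℕ) ω)), abs_mul_abs_self (w (X (i:ℕ) ω))]
        have hint2 : Integrable (fun ω => w (X (i:ℕ) ω) * w (X (i:ℕ) ω)) P := by
          refine Stmt3Aux.integrable_of_bdd
            ((hw_meas.comp (hXmeas i)).mul (hw_meas.comp (hXmeas i)))
            (C := (2*(M:ℝ))*(2*(M:ℝ))) (fun ω => ?_)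
          rw [abs_mul]
          have h3 := hw_bdd (X (i:ℕ) ω)
          exact mul_le_mul h3 h3 (abs_nonneg _) (by positivity)
        calc ∫ ω, w (X i ω) * w (X i ω) ∂P
            ≤ ∫ _ω, 4 * (M:ℝ) ^ 2 ∂P := integral_mono hint2 (integrable_const _) hb
        _ = 4 * (M:ℝ) ^ 2 := by simp
      have hRRnn : 0 ≤ ∫ ω, R n i ω * R n i ω ∂P :=
        integral_nonneg (fun ω => mul_nonneg (hRnonneg n i ω) (hRnonneg n i ω))
      exact mul_le_mul_of_nonneg_left hww hRRnn
    calc ∑ i : Fin n, (∫ ω, R n i ω * R n i ω ∂P) * ∫ ω, w (X i ω) * w (X i ω) ∂P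
        ≤ ∑ i : Fin n, (∫ ω, R n i ω * R n i ω ∂P) * (4 * (M:ℝ) ^ 2) :=
          Finset.sum_le_sum (fun i _ => hstep i)
    _ = (∑ i : Fin n, ∫ ω, R n i ω * R n i ω ∂P) * (4 * (M:ℝ) ^ 2) := by
          rw [Finset.sum_mul]
    _ ≤ (∫ ω, g n ω ∂P) * (4 * (M:ℝ) ^ 2) := by
          refine mul_le_mul_of_nonneg_right ?_ (by positivity)
          rw [← integral_finset_sum _ (fun i _ => hRR_int i i)]
          refine integral_mono (integrable_finset_sum _ (fun i _ => hRR_int i i))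
            (hg_int n) (fun ω => ?_)
          have hs := hRsum n hn0 ω
          calc ∑ i : Fin n, R n i ω * R n i ω
              ≤ ∑ i : Fin n, g n ω * R n i ω := Finset.sum_le_sum (fun i _ =>
                mul_le_mul_of_nonneg_right (hR_le_g n i ω) (hRnonneg n i ω))
          _ = g n ω * ∑ i : Fin n, R n i ω := by rw [Finset.mul_sum]
          _ = g n ω := by rw [hs, mul_one]
    _ = 4 * (M:ℝ) ^ 2 * ∫ ω, g n ω ∂P := by ring
  -- bound on D
  have hRz_int : ∀ i : Fin n, Integrable (fun ω => R n i ω * z (X i ω)) P := by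
    intro i
    refine (hz_int i).bdd_mul (hRmeas n i).aestronglyMeasurable (c := 1) (Filter.Eventually.of_forall fun ω => ?_)
    rw [Real.norm_eq_abs]
    exact abs_le.2 ⟨by linarith [hRnonneg n i ω], hR_le_one n i ω⟩
  have hRabsz_int : ∀ i : Fin n, Integrable (fun ω => R n i ω * |z (X i ω)|) P := by
    intro i
    refine (hz_int i).abs.bdd_mul (hRmeas n i).aestronglyMeasurable (c := 1) (Filter.Eventually.of_forall fun ω => ?_)
    rw [Real.norm_eq_abs]
    exact abs_le.2 ⟨by linarith [hRnonneg n i ω], hR_le_one n i ω⟩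
  have hD_int : Integrable D P := by
    rw [hD_def]
    exact (integrable_finset_sum _ (fun i _ => hRz_int i)).add (integrable_const _)
  have hD_le : ∫ ω, |D ω| ∂P ≤ 2 * η := by
    have hptw : ∀ ω, |D ω| ≤ (∑ i : Fin n, R n i ω * |z (X i ω)|) + |ν - μ| := by
      intro ω
      rw [hD_def]
      simp only []
      calc |(∑ i : Fin n, R n i ω * z (X i ω)) + (ν - μ)|
          ≤ |∑ i : Fin n, R n i ω * z (X i ω)| + |ν - μ| := abs_add_le _ _
      _ ≤ (∑ i : Fin n, R n i ω * |z (X i ω)|) + |ν - μ| := by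
          refine add_le_add ?_ le_rfl
          refine (Finset.abs_sum_le_sum_abs _ _).trans ?_
          refine Finset.sum_le_sum (fun i _ => ?_)
          rw [abs_mul, abs_of_nonneg (hRnonneg n i ω)]
    have hmajint : Integrable
        (fun ω => (∑ i : Fin n, R n i ω * |z (X i ω)|) + |ν - μ|) P :=
      (integrable_finset_sum _ (fun i _ => hRabsz_int i)).add (integrable_const _)
    calc ∫ ω, |D ω| ∂P
        ≤ ∫ ω, ((∑ i : Fin n, R n i ω * |z (X i ω)|) + |ν - μ|) ∂P :=
          integral_mono hD_int.abs hmajint hptw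
    _ = (∑ i : Fin n, ∫ ω, R n i ω * |z (X i ω)| ∂P) + |ν - μ| := by
          rw [integral_add (integrable_finset_sum _ (fun i _ => hRabsz_int i))
            (integrable_const _), integral_const]
          simp [integral_finset_sum _ (fun i _ => hRabsz_int i)]
    _ = (∑ i : Fin n, (∫ ω, R n i ω ∂P) * η) + |ν - μ| := by
          refine congrArg (· + |ν - μ|) ?_
          refine Finset.sum_congr rfl (fun i _ => ?_)
          have := Stmt3Aux.mul_indep (hRmeas n) hXmeas (hRindep n)
            (f := fun v => v i) (g := fun x => |z (x i)|)
            (measurable_pi_apply i)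
            ((hz_meas.comp (measurable_pi_apply (i:ℕ))).abs)
          rw [this, hEz i]
    _ = (∑ i : Fin n, ∫ ω, R n i ω ∂P) * η + |ν - μ| := by rw [Finset.sum_mul]
    _ = 1 * η + |ν - μ| := by
          rw [← integral_finset_sum _ (fun i _ => Stmt3Aux.integrable_of_bdd (hRmeas n i)
            (C := 1) (fun ω => abs_le.2 ⟨by linarith [hRnonneg n i ω], hR_le_one n i ω⟩))]
          rw [integral_congr_ae (Filter.Eventually.of_forall (hRsum n hn0))]
          simp
    _ ≤ 2 * η := by linarith [hνμ]
  -- Markov / Chebyshev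
  have hs1 := mul_meas_ge_le_integral_of_nonneg (μ := P) (f := fun ω => (A ω) ^ 2)
    (Filter.Eventually.of_forall (fun ω => sq_nonneg _)) hA2_int ((ε/2)^2)
  have hs2 := mul_meas_ge_le_integral_of_nonneg (μ := P) (f := fun ω => |D ω|)
    (Filter.Eventually.of_forall (fun ω => abs_nonneg _)) hD_int.abs (ε/2)
  have hsub : {ω | ε ≤ dist (∑ i : Fin n, R n i ω * X i ω) μ}
      ⊆ {ω | (ε/2)^2 ≤ (A ω)^2} ∪ {ω | ε/2 ≤ |D ω|} := by
    intro ω hω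
    simp only [Set.mem_setOf_eq, Set.mem_union]
    by_contra hcon
    push_neg at hcon
    obtain ⟨h1, h2⟩ := hcon
    simp only [Set.mem_setOf_eq, Real.dist_eq] at hω
    rw [hdecomp ω] at hω
    have hA' : |A ω| < ε/2 := by
      nlinarith [abs_nonneg (A ω), sq_abs (A ω)]
    have := abs_add_le (A ω) (D ω)
    linarith
  have hPseq : P {ω | ε ≤ dist (∑ i : Fin n, R n i ω * X i ω) μ}
      ≤ P {ω | (ε/2)^2 ≤ (A ω)^2} + P {ω | ε/2 ≤ |D ω|} :=
    (measure_mono hsub).trans (measure_union_le _ _)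
  have h1t : (P {ω | (ε/2)^2 ≤ (A ω)^2}).toReal ≤ (∫ ω, (A ω)^2 ∂P) / (ε/2)^2 := by
    rw [le_div_iff₀ (by positivity)]
    rw [← measureReal_def]
    linarith [hs1]
  have h2t : (P {ω | ε/2 ≤ |D ω|}).toReal ≤ (∫ ω, |D ω| ∂P) / (ε/2) := by
    rw [le_div_iff₀ (by positivity)]
    rw [← measureReal_def]
    linarith [hs2]
  have hptoReal : (P {ω | ε ≤ dist (∑ i : Fin n, R n i ω * X i ω) μ}).toReal
      ≤ (P {ω | (ε/2)^2 ≤ (A ω)^2}).toReal + (P {ω | ε/2 ≤ |D ω|}).toReal := by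
    have hne : P {ω | (ε/2)^2 ≤ (A ω)^2} + P {ω | ε/2 ≤ |D ω|} ≠ ⊤ :=
      ENNReal.add_ne_top.2 ⟨measure_ne_top _ _, measure_ne_top _ _⟩
    have := ENNReal.toReal_mono hne hPseq
    rwa [ENNReal.toReal_add (measure_ne_top _ _) (measure_ne_top _ _)] at this
  have hfin : (P {ω | ε ≤ dist (∑ i : Fin n, R n i ω * X i ω) μ}).toReal ≤ d := by
    have e1 : (∫ ω, (A ω)^2 ∂P) / (ε/2)^2 ≤ d/2 := by
      have hA2c2 : ∫ ω, (A ω)^2 ∂P ≤ 4 * (M:ℝ) ^ 2 * c2 :=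
        hA2_le.trans (mul_le_mul_of_nonneg_left hn2.le (by positivity))
      rw [div_le_iff₀ (by positivity)]
      have hkey : 4 * (M:ℝ) ^ 2 * c2 ≤ d / 2 * (ε / 2) ^ 2 := by
        rw [hc2_def]
        have h1 : 4*(M:ℝ)^2 * (d*ε^2/(32*((M:ℝ)^2+1)))
            = (4*(M:ℝ)^2*(d*ε^2))/(32*((M:ℝ)^2+1)) := by ring
        rw [h1, div_le_iff₀ (by positivity)]
        have hM2 : (0:ℝ) ≤ (M:ℝ)^2 := sq_nonneg _
        have hde : 0 ≤ d * ε^2 := mul_nonneg hd0.le (sq_nonneg _)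
        nlinarith
      linarith
    have e2 : (∫ ω, |D ω| ∂P) / (ε/2) ≤ d/2 := by
      rw [div_le_iff₀ (by positivity)]
      have : 2 * η ≤ d / 2 * (ε / 2) := by nlinarith
      linarith [hD_le]
    linarith [hptoReal, h1t, h2t]
  calc P {ω | ε ≤ dist (∑ i : Fin n, R n i ω * X i ω) μ}
      = ENNReal.ofReal ((P {ω | ε ≤ dist (∑ i : Fin n, R n i ω * X i ω) μ}).toReal) :=
        (ENNReal.ofReal_toReal (measure_ne_top _ _)).symm
  _ ≤ ENNReal.ofReal d := ENNReal.ofReal_le_ofReal hfin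
  _ ≤ δ := hdδ
end
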